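/- Let n ≥ 2, let T = (T_{ab}^c) be a torsion-type tensor, let i ∈ {1,…,n−1}, and let C_{1;i},…,C_{n;i} be real numbers. If Σ_{a<b, c} σ_{ab;i}^c(y)·T_{ab}^c = 2·Σ_{j=1}^n C_{j;i}·y_j for all y ∈ ℝⁿ, then C_{n;i} = 0 and T_{in}^i = C_{i;i}. -/
import Mathlib


open Finset

/-- The last index `n` of `{1,…,n}`, realized as the final element of `Fin n`. -/
def lastIdx (n : ℕ) (hn : 1 ≤ n) : Fin n := ⟨n - 1, by omega⟩

/-- The coefficient `σ_{ab;i}^c(y) = (δᵢᶜyₐ + δᵢᵃy_c)δ_bⁿ + (δᵢᵇyₐ − δᵢᵃy_b)δ_cⁿ` of the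
torsion component `T_{ab}^c` in the `i`-th compatibility equation of a Randers metric. -/
noncomputable def sigma (n : ℕ) (hn : 1 ≤ n) (a b c i : Fin n) (y : Fin n → ℝ) : ℝ :=
  ((if i = c then (1 : ℝ) else 0) * y a + (if i = a then (1 : ℝ) else 0) * y c) *
      (if b = lastIdx n hn then (1 : ℝ) else 0) +
    ((if i = b then (1 : ℝ) else 0) * y a - (if i = a then (1 : ℝ) else 0) * y b) *
      (if c = lastIdx n hn then (1 : ℝ) else 0)

/-- A torsion-type tensor: a family `T_{ab}^c` of reals, skew-symmetric in the lower
indices. -/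
def IsSkew (n : ℕ) (T : Fin n → Fin n → Fin n → ℝ) : Prop :=
  ∀ a b c, T a b c = - T b a c

/-- The left-hand side `Σ_{a<b, c} σ_{ab;i}^c(y)·T_{ab}^c` of the `i`-th compatibility
equation. -/
noncomputable def compatLHS (n : ℕ) (hn : 1 ≤ n) (T : Fin n → Fin n → Fin n → ℝ)
    (i : Fin n) (y : Fin n → ℝ) : ℝ :=
  ∑ a : Fin n, ∑ b : Fin n, ∑ c : Fin n,
    if a < b then sigma n hn a b c i y * T a b c else 0

lemma ite_split_add {P : Prop} [Decidable P] (a b : ℝ) :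
    (if P then a + b else 0) = (if P then a else 0) + (if P then b else 0) := by
  split <;> simp

lemma ite_split_sub {P : Prop} [Decidable P] (a b : ℝ) :
    (if P then a - b else 0) = (if P then a else 0) - (if P then b else 0) := by
  split <;> simp

lemma sum3_delta {n : ℕ} (P : Fin n → Fin n → Fin n → Prop)
    [∀ x y z, Decidable (P x y z)] (f : Fin n → Fin n → Fin n → ℝ) (a b c : Fin n)
    (h : ∀ x y z, P x y z → x = a ∧ y = b ∧ z = c) :
    (∑ x : Fin n, ∑ y : Fin n, ∑ z : Fin n, if P x y z then f x y z else 0) =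
      if P a b c then f a b c else 0 := by
  have hz : ∀ x y z, ¬(x = a ∧ y = b ∧ z = c) → (if P x y z then f x y z else 0) = 0 := by
    intro x y z hne
    rw [if_neg]; intro hP; exact hne (h x y z hP)
  rw [Fintype.sum_eq_single a fun x hx => Finset.sum_eq_zero fun y _ =>
        Finset.sum_eq_zero fun z _ => hz x y z (by tauto),
      Fintype.sum_eq_single b fun y hy => Finset.sum_eq_zero fun z _ => hz a y z (by tauto),
      Fintype.sum_eq_single c fun z hzc => hz a b z (by tauto)]

/-- if the `i`-th compatibility equation
`Σ_{a<b,c} σ_{ab;i}^c(y)·T_{ab}^c = 2·Σ_j C_{j;i}·y_j` holds for all `y`, where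
`i ∈ {1,…,n−1}`, then `C_{n;i} = 0` and `T_{in}^i = C_{i;i}`. -/
theorem ith_equation_solvability (n : ℕ) (hn : 2 ≤ n) (T : Fin n → Fin n → Fin n → ℝ)
    (hT : IsSkew n T) (i : Fin n) (hi : i < lastIdx n (by omega)) (C : Fin n → ℝ)
    (heq : ∀ y : Fin n → ℝ,
      compatLHS n (by omega) T i y = 2 * ∑ j : Fin n, C j * y j) :
    C (lastIdx n (by omega)) = 0 ∧ T i (lastIdx n (by omega)) i = C i := by
  have m : Fin n := lastIdx n (by omega)
  set m := lastIdx n (show 1 ≤ n by omega) with hm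
  have key : ∀ j : Fin n,
      (if j < m ∧ m = m ∧ j = j ∧ i = i then T j m i else 0) +
        (if i < m ∧ m = m ∧ j = j ∧ i = i then T i m j else 0) +
      ((if j < i ∧ m = m ∧ j = j ∧ i = i then T j i m else 0) -
        (if i < j ∧ m = m ∧ j = j ∧ i = i then T i j m else 0)) = 2 * C j := by
    intro j
    have h := heq (Pi.single j 1)
    have hRHS : (∑ j' : Fin n, C j' * (Pi.single j 1 : Fin n → ℝ) j') = C j := by
      simp [Pi.single_apply, mul_ite, mul_zero, Finset.sum_ite_eq', Finset.mem_univ]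
    rw [hRHS] at h
    rw [← h]
    simp only [compatLHS, sigma, Pi.single_apply, mul_ite, ite_mul, mul_one, mul_zero, one_mul,
      zero_mul, add_mul, sub_mul, zero_add, add_zero, sub_zero, zero_sub, ← hm]
    simp only [← ite_and, ite_split_add, ite_split_sub, Finset.sum_add_distrib,
      Finset.sum_sub_distrib]
    rw [sum3_delta (fun x y z => x < y ∧ y = m ∧ x = j ∧ i = z) _ j m i
        (by rintro x y z ⟨_, h2, h3, h4⟩; exact ⟨h3, h2, h4.symm⟩),
      sum3_delta (fun x y z => x < y ∧ y = m ∧ z = j ∧ i = x) _ i m j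
        (by rintro x y z ⟨_, h2, h3, h4⟩; exact ⟨h4.symm, h2, h3⟩),
      sum3_delta (fun x y z => x < y ∧ z = m ∧ x = j ∧ i = y) _ j i m
        (by rintro x y z ⟨_, h2, h3, h4⟩; exact ⟨h3, h4.symm, h2⟩),
      sum3_delta (fun x y z => x < y ∧ z = m ∧ y = j ∧ i = x) _ i j m
        (by rintro x y z ⟨_, h2, h3, h4⟩; exact ⟨h4.symm, h3, h2⟩)]
    simp
  constructor
  · have h := key m
    simp [lt_irrefl, hi, not_lt.mpr hi.le] at h
    linarith
  · have h := key i
    simp [lt_irrefl, hi] at h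
    linarith
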